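/- arXiv:2412.01465 — 5 statements merged into one kernel-verified Lean document; each statement's English description precedes it below -/
import Mathlib

section
/- Every interval matrix A ∈ {0,1}^{m×n} (ones consecutive in each column) is totally unimodular, i.e., every square submatrix has determinant 0, 1, or −1. -/
/-- A matrix is totally unimodular if every square submatrix has determinant
in `{-1, 0, 1}`. -/
def IsTotallyUnimod {m n : Type*} (A : Matrix m n ℤ) : Prop :=
  ∀ (k : ℕ) (f : Fin k → m) (g : Fin k → n),
    Function.Injective f → Function.Injective g →
      (A.submatrix f g).det ∈ ({-1, 0, 1} : Set ℤ)

/-- Subtracting a fixed column `j0` from each column in a set `s` not containing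
`j0` does not change the determinant. -/
lemma det_sub_cols {k : ℕ} (B : Matrix (Fin k) (Fin k) ℤ) (j0 : Fin k)
    (s : Finset (Fin k)) (hj0 : j0 ∉ s) :
    (Matrix.of fun i j => if j ∈ s then B i j - B i j0 else B i j).det = B.det := by
  induction s using Finset.induction_on with
  | empty => simp; rfl
  | @insert a s ha ih =>
    have hj0a : j0 ≠ a := fun h => hj0 (h ▸ Finset.mem_insert_self a s)
    have hj0s : j0 ∉ s := fun h => hj0 (Finset.mem_insert_of_mem h)
    set M : Matrix (Fin k) (Fin k) ℤ :=
      Matrix.of fun i j => if j ∈ s then B i j - B i j0 else B i j with hM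
    have hEq : (Matrix.of fun i j => if j ∈ insert a s then B i j - B i j0 else B i j)
        = M.updateCol a (fun i => M i a + (-1 : ℤ) • M i j0) := by
      funext i j
      by_cases hja : j = a
      · subst hja
        simp [Matrix.updateCol_apply, hM, ha, hj0s, sub_eq_add_neg]
      · simp [Matrix.updateCol_apply, hja, Finset.mem_insert, hM]
    rw [hEq, Matrix.det_updateCol_add_smul_self M (Ne.symm hj0a) (-1), ih hj0s]

lemma key_interval_det : ∀ (k : ℕ) (B : Matrix (Fin k) (Fin k) ℤ),
    (∀ i j, B i j = 0 ∨ B i j = 1) →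
    (∀ (j i k' ℓ : Fin k), i ≤ ℓ → ℓ ≤ k' → B i j = 1 → B k' j = 1 → B ℓ j = 1) →
    B.det ∈ ({-1, 0, 1} : Set ℤ) := by
  intro k
  induction k with
  | zero =>
    intro B _ _
    simp [Matrix.det_fin_zero]
  | succ k ih =>
    intro B h01 hint
    by_cases hrow : ∀ j, B 0 j = 0
    · have : B.det = 0 := Matrix.det_eq_zero_of_row_eq_zero 0 hrow
      simp [this]
    · push_neg at hrow
      obtain ⟨j1, hj1⟩ := hrow
      have hj1' : B 0 j1 = 1 := (h01 0 j1).resolve_left hj1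
      -- choose j0 with B 0 j0 = 1 minimizing the number of ones in the column
      set S : Finset (Fin (k+1)) := Finset.univ.filter (fun j => B 0 j = 1) with hS
      have hSne : S.Nonempty := ⟨j1, by simp [hS, hj1']⟩
      obtain ⟨j0, hj0S, hj0min⟩ := Finset.exists_min_image S
        (fun j => (Finset.univ.filter fun i => B i j = 1).card) hSne
      have hj0one : B 0 j0 = 1 := by simpa [hS] using hj0S
      -- minimality: ones of column j0 are contained in ones of any column of S
      have hmin : ∀ j, B 0 j = 1 → ∀ i, B i j0 = 1 → B i j = 1 := by
        intro j hj i hi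
        by_contra hne
        have sub1 : (Finset.univ.filter fun i' => B i' j = 1) ⊆ Finset.Iio i := by
          intro i' hmem
          simp only [Finset.mem_filter] at hmem
          rw [Finset.mem_Iio]
          by_contra hlt
          push_neg at hlt
          exact hne (hint j 0 i' i (Fin.zero_le i) hlt hj hmem.2)
        have sub2 : Finset.Iic i ⊆ (Finset.univ.filter fun i' => B i' j0 = 1) := by
          intro i' hmem
          rw [Finset.mem_Iic] at hmem
          simp only [Finset.mem_filter, Finset.mem_univ, true_and]
          exact hint j0 0 i i' (Fin.zero_le i') hmem hj0one hi
        have c1 : (Finset.univ.filter fun i' => B i' j = 1).card ≤ (i : ℕ) := by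
          simpa [Fin.card_Iio] using Finset.card_le_card sub1
        have c2 : (i : ℕ) + 1 ≤ (Finset.univ.filter fun i' => B i' j0 = 1).card := by
          simpa [Fin.card_Iic] using Finset.card_le_card sub2
        have := hj0min j (by simp [hS, hj])
        omega
      -- subtract column j0 from all other columns having a 1 in row 0
      set C : Matrix (Fin (k+1)) (Fin (k+1)) ℤ :=
        Matrix.of fun i j => if j ∈ S.erase j0 then B i j - B i j0 else B i j with hC
      have hdet : C.det = B.det := det_sub_cols B j0 _ (Finset.notMem_erase j0 S)
      have hmem_erase : ∀ j, j ∈ S.erase j0 ↔ j ≠ j0 ∧ B 0 j = 1 := by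
        intro j; simp [hS, Finset.mem_erase]
      have hCapp : ∀ i j, C i j = if j ∈ S.erase j0 then B i j - B i j0 else B i j :=
        fun _ _ => rfl
      -- C is a 0/1 interval matrix
      have hC01 : ∀ i j, C i j = 0 ∨ C i j = 1 := by
        intro i j
        by_cases hj : j ∈ S.erase j0
        · have hj' := (hmem_erase j).mp hj
          rcases h01 i j0 with h0 | h1
          · rw [hCapp, if_pos hj, h0, sub_zero]; exact h01 i j
          · left; rw [hCapp, if_pos hj, h1, hmin j hj'.2 i h1, sub_self]
        · rw [hCapp, if_neg hj]; exact h01 i j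
      have hCint : ∀ (j i k' ℓ : Fin (k+1)), i ≤ ℓ → ℓ ≤ k' →
          C i j = 1 → C k' j = 1 → C ℓ j = 1 := by
        intro j i k' ℓ h1 h2 hi hk
        by_cases hj : j ∈ S.erase j0
        · have hj' := (hmem_erase j).mp hj
          -- from C i j = 1 deduce B i j0 = 0 and B i j = 1
          have extract : ∀ i', C i' j = 1 → B i' j0 = 0 ∧ B i' j = 1 := by
            intro i' hci
            rcases h01 i' j0 with h0 | hone
            · refine ⟨h0, ?_⟩
              have : C i' j = B i' j := by rw [hCapp, if_pos hj, h0, sub_zero]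
              omega
            · exfalso
              have hbj : B i' j = 1 := hmin j hj'.2 i' hone
              have : C i' j = 0 := by rw [hCapp, if_pos hj, hone, hbj, sub_self]
              omega
          obtain ⟨hi0, hi1⟩ := extract i hi
          obtain ⟨hk0, hk1⟩ := extract k' hk
          have hBl : B ℓ j = 1 := hint j i k' ℓ h1 h2 hi1 hk1
          have hBl0 : B ℓ j0 = 0 := by
            rcases h01 ℓ j0 with h0 | hone
            · exact h0
            · exfalso
              have : B i j0 = 1 := hint j0 0 ℓ i (Fin.zero_le i) h1 hj0one hone
              omega
          rw [hCapp, if_pos hj, hBl, hBl0, sub_zero]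
        · have e : ∀ i', C i' j = B i' j := fun i' => by rw [hCapp, if_neg hj]
          rw [e] at hi hk ⊢
          exact hint j i k' ℓ h1 h2 hi hk
      -- row 0 of C has a single 1, at column j0
      have hC0j0 : C 0 j0 = 1 := by
        rw [hCapp, if_neg (Finset.notMem_erase j0 S)]; exact hj0one
      have hC0 : ∀ j, j ≠ j0 → C 0 j = 0 := by
        intro j hj
        rcases h01 0 j with h0 | h1
        · have hne : j ∉ S.erase j0 := by
            rw [hmem_erase]; rintro ⟨-, h⟩; omega
          rw [hCapp, if_neg hne]; exact h0
        · have hmem : j ∈ S.erase j0 := (hmem_erase j).mpr ⟨hj, h1⟩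
          rw [hCapp, if_pos hmem, h1, hj0one, sub_self]
      -- Laplace expansion along row 0
      have hexp : C.det = (-1) ^ (j0 : ℕ) * (C.submatrix Fin.succ j0.succAbove).det := by
        rw [Matrix.det_succ_row_zero]
        rw [Finset.sum_eq_single j0]
        · rw [hC0j0]; ring
        · intro b _ hb
          rw [hC0 b hb]; ring
        · intro h; exact absurd (Finset.mem_univ j0) h
      -- the minor is a 0/1 interval matrix
      have hm : (C.submatrix Fin.succ j0.succAbove).det ∈ ({-1, 0, 1} : Set ℤ) := by
        apply ih
        · intro i j; exact hC01 _ _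
        · intro j i k' ℓ h1 h2 hi hk
          exact hCint _ _ _ _ (Fin.succ_le_succ_iff.mpr h1) (Fin.succ_le_succ_iff.mpr h2) hi hk
      simp only [Set.mem_insert_iff, Set.mem_singleton_iff] at hm ⊢
      rw [← hdet, hexp]
      rcases Nat.even_or_odd (j0 : ℕ) with he | ho
      · rw [he.neg_one_pow]; omega
      · rw [ho.neg_one_pow]; omega

/-- Every interval matrix (0/1 entries, with the ones consecutive in each
column) is totally unimodular. -/
theorem stmt_4 (m n : ℕ) (A : Matrix (Fin m) (Fin n) ℤ)
    (h01 : ∀ i j, A i j = 0 ∨ A i j = 1)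
    (hint : ∀ (j : Fin n) (i k ℓ : Fin m), i ≤ ℓ → ℓ ≤ k →
      A i j = 1 → A k j = 1 → A ℓ j = 1) :
    IsTotallyUnimod A := by
  intro k f g hf hg
  -- sort the rows
  set s : Finset (Fin m) := Finset.univ.image f with hs
  have hcard : s.card = k := by
    rw [hs, Finset.card_image_of_injective _ hf, Finset.card_univ, Fintype.card_fin]
  set F : Fin k → Fin m := fun i => s.orderEmbOfFin hcard i with hF
  have hFmono : Monotone F := (s.orderEmbOfFin hcard).monotone
  set σ : Fin k → Fin k :=
    fun i => (s.orderIsoOfFin hcard).symm ⟨f i, by rw [hs]; exact Finset.mem_image_of_mem f (Finset.mem_univ i)⟩ with hσ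
  have hfσ : ∀ i, F (σ i) = f i := by
    intro i
    simp only [hF, hσ, ← Finset.coe_orderIsoOfFin_apply, OrderIso.apply_symm_apply]
  have hσinj : Function.Injective σ := by
    intro a b hab
    apply hf
    rw [← hfσ a, ← hfσ b, hab]
  have hσbij : Function.Bijective σ := (Finite.injective_iff_bijective).mp hσinj
  set π : Equiv.Perm (Fin k) := Equiv.ofBijective σ hσbij with hπ
  have hsub : A.submatrix f g = (A.submatrix F g).submatrix π id := by
    funext i j
    simp only [Matrix.submatrix_apply, id_eq, hπ, Equiv.ofBijective_apply, hfσ]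
  have hB : (A.submatrix F g).det ∈ ({-1, 0, 1} : Set ℤ) := by
    apply key_interval_det
    · intro i j; exact h01 _ _
    · intro j i k' ℓ h1 h2 hi hk
      exact hint (g j) (F i) (F k') (F ℓ) (hFmono h1) (hFmono h2) hi hk
  rw [hsub, Matrix.det_permute]
  simp only [Set.mem_insert_iff, Set.mem_singleton_iff] at hB ⊢
  rcases Int.units_eq_one_or (Equiv.Perm.sign π) with hsg | hsg <;> rw [hsg] <;>
    simp <;> omega
end

section
/- Let C̃ and Ĉ be two ordinal cost matrices on the same n elements (each column of each matrix is a prefix-of-ones vector: entries are 1 up to some row index and 0 afterwards), and let α, β ∈ {−1, 0, 1}. Then the stacked matrix A with first block α·C̃ and second block β·Ĉ is totally unimodular. -/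
/-- An ordinal cost matrix: 0/1 entries, and each column is a prefix of ones
followed by zeros. -/
def IsOrdinalCostMatrix {K n : ℕ} (C : Matrix (Fin K) (Fin n) ℤ) : Prop :=
  (∀ i j, C i j = 0 ∨ C i j = 1) ∧
  (∀ (j : Fin n) (i i' : Fin K), i' ≤ i → C i j = 1 → C i' j = 1)

namespace StmtAux

open Matrix

lemma mul_mem_S {a b : ℤ} (ha : a ∈ ({-1,0,1} : Set ℤ)) (hb : b ∈ ({-1,0,1} : Set ℤ)) :
    a * b ∈ ({-1,0,1} : Set ℤ) := by
  rcases ha with ha|ha|ha <;> rcases hb with hb|hb|hb <;> subst ha <;> subst hb <;> simp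

lemma neg_mem_S {a : ℤ} (ha : a ∈ ({-1,0,1} : Set ℤ)) : -a ∈ ({-1,0,1} : Set ℤ) := by
  rcases ha with ha|ha|ha <;> subst ha <;> simp

/-- Lemma A: a square matrix in which every column has at most one `+1`, at most one
`-1`, and zeros elsewhere has determinant in `{-1,0,1}`. -/
lemma det_mem_of_network : ∀ (k : ℕ) (M : Matrix (Fin k) (Fin k) ℤ),
    (∀ i j, M i j ∈ ({-1,0,1} : Set ℤ)) →
    (∀ j i i', M i j = 1 → M i' j = 1 → i = i') →
    (∀ j i i', M i j = -1 → M i' j = -1 → i = i') →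
    M.det ∈ ({-1,0,1} : Set ℤ) := by
  intro k
  induction k with
  | zero =>
    intro M _ _ _
    simp [Matrix.det_fin_zero]
  | succ k ih =>
    intro M hent h1 h2
    by_cases hall : ∀ j, (∃ i, M i j = 1) ∧ (∃ i, M i j = -1)
    · -- every column has both a +1 and a -1, so all column sums are 0, det = 0
      right; left
      rw [← Matrix.exists_vecMul_eq_zero_iff]
      refine ⟨(fun _ => 1), ?_, ?_⟩
      · intro h
        have := congrFun h 0
        simp at this
      · funext j
        obtain ⟨⟨ip, hip⟩, im, him⟩ := hall j
        have hne : ip ≠ im := by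
          intro h; rw [h, him] at hip; omega
        have hfun : ∀ i, M i j = (if i = ip then 1 else 0) + (if i = im then -1 else 0) := by
          intro i
          by_cases hi : i = ip
          · subst hi; simp [hip, hne]
          · by_cases hi' : i = im
            · subst hi'; simp [him, Ne.symm hne, hi]
            · rcases hent i j with h|h|h
              · exact absurd (h2 j i im h him) hi'
              · simp [hi, hi', h]
              · exact absurd (h1 j i ip h hip) hi
        have hv : ((fun _ => (1:ℤ)) ᵥ* M) j = ∑ i, M i j := by
          simp [Matrix.vecMul, dotProduct]
        show ((fun _ => (1:ℤ)) ᵥ* M) j = (0 : Fin (k+1) → ℤ) j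
        rw [hv, Pi.zero_apply]
        simp_rw [hfun]
        rw [Finset.sum_add_distrib, Finset.sum_ite_eq' Finset.univ ip,
          Finset.sum_ite_eq' Finset.univ im]
        simp
    · obtain ⟨j, hj⟩ := not_forall.mp hall
      have hj' : (∀ i, M i j ≠ 1) ∨ (∀ i, M i j ≠ -1) := by
        rcases not_and_or.mp hj with hj1 | hj1
        · left; push_neg at hj1; exact hj1
        · right; push_neg at hj1; exact hj1
      have hcol : ∀ i i', M i j ≠ 0 → M i' j ≠ 0 → i = i' := by
        intro i i' h h'
        rcases hj' with hj1 | hj1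
        · have hi : M i j = -1 := by
            rcases hent i j with a|a|a
            · exact a
            · exact absurd a h
            · exact absurd a (hj1 i)
          have hi' : M i' j = -1 := by
            rcases hent i' j with a|a|a
            · exact a
            · exact absurd a h'
            · exact absurd a (hj1 i')
          exact h2 j i i' hi hi'
        · have hi : M i j = 1 := by
            rcases hent i j with a|a|a
            · exact absurd a (hj1 i)
            · exact absurd a h
            · exact a
          have hi' : M i' j = 1 := by
            rcases hent i' j with a|a|a
            · exact absurd a (hj1 i')
            · exact absurd a h'
            · exact a
          exact h1 j i i' hi hi'
      by_cases hz : ∀ i, M i j = 0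
      · right; left
        exact Matrix.det_eq_zero_of_column_eq_zero j hz
      · push_neg at hz
        obtain ⟨i0, hi0⟩ := hz
        rw [Matrix.det_succ_column M j, Finset.sum_eq_single i0]
        · have hsign : ((-1 : ℤ) ^ ((i0 : ℕ) + (j : ℕ))) ∈ ({-1,0,1} : Set ℤ) := by
            rcases neg_one_pow_eq_or ℤ ((i0 : ℕ) + (j : ℕ)) with h|h <;> rw [h] <;> simp
          refine mul_mem_S (mul_mem_S hsign (hent i0 j)) (ih _ ?_ ?_ ?_)
          · intro i' j'; exact hent _ _
          · intro j' i' i'' hA hB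
            exact Fin.succAbove_right_injective
              (h1 (j.succAbove j') _ _ hA hB)
          · intro j' i' i'' hA hB
            exact Fin.succAbove_right_injective
              (h2 (j.succAbove j') _ _ hA hB)
        · intro b _ hb
          have : M b j = 0 := by
            by_contra hc
            exact hb (hcol b i0 hc hi0)
          simp [this]
        · intro hmem
          exact absurd (Finset.mem_univ i0) hmem

/-- The upper bidiagonal difference matrix: `1` on the diagonal, `-1` just above it. -/
def Tmat (k : ℕ) : Matrix (Fin k) (Fin k) ℤ :=
  Matrix.of (fun i j => if i = j then (1 : ℤ) else if (j : ℕ) = (i : ℕ) + 1 then -1 else 0)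

lemma Tmat_det (k : ℕ) : (Tmat k).det = 1 := by
  rw [Matrix.det_of_upperTriangular]
  · simp [Tmat]
  · intro i j hij
    have h1 : ¬ (i = j) := fun h => absurd h.symm (ne_of_lt hij)
    have h2 : (j : ℕ) ≠ (i : ℕ) + 1 := by
      have : (j : ℕ) < (i : ℕ) := hij
      omega
    simp [Tmat, h1, h2]

lemma Tmat_mul_apply {k : ℕ} (M : Matrix (Fin k) (Fin k) ℤ) (i j : Fin k) :
    (Tmat k * M) i j =
      M i j - (if h : (i : ℕ) + 1 < k then M ⟨(i : ℕ) + 1, h⟩ j else 0) := by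
  rw [Matrix.mul_apply]
  by_cases h : (i : ℕ) + 1 < k
  · have hsplit : ∀ l : Fin k, Tmat k i l * M l j =
        (if l = i then M l j else 0) +
          (if l = (⟨(i : ℕ) + 1, h⟩ : Fin k) then -M l j else 0) := by
      intro l
      rcases eq_or_ne l i with rfl | hl
      · have hne : ¬ (l = (⟨(l : ℕ) + 1, h⟩ : Fin k)) := by simp [Fin.ext_iff]
        simp [Tmat, hne]
      · rcases eq_or_ne l (⟨(i : ℕ) + 1, h⟩ : Fin k) with rfl | hl'
        · have hne : ¬ (i = (⟨(i : ℕ) + 1, h⟩ : Fin k)) := by simp [Fin.ext_iff]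
          simp [Tmat, hl, hne]
        · have hv : (l : ℕ) ≠ (i : ℕ) + 1 := fun hc => hl' (Fin.ext hc)
          simp [Tmat, hl, Ne.symm hl, hl', hv]
    rw [Finset.sum_congr rfl (fun l _ => hsplit l), Finset.sum_add_distrib,
      Finset.sum_ite_eq' Finset.univ i, Finset.sum_ite_eq' Finset.univ]
    rw [dif_pos h]
    simp [sub_eq_add_neg]
  · have hsplit : ∀ l : Fin k, Tmat k i l * M l j = (if l = i then M l j else 0) := by
      intro l
      rcases eq_or_ne l i with rfl | hl
      · simp [Tmat]
      · have hv : (l : ℕ) ≠ (i : ℕ) + 1 := by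
          have := l.isLt
          omega
        simp [Tmat, hl, Ne.symm hl, hv]
    rw [Finset.sum_congr rfl (fun l _ => hsplit l), Finset.sum_ite_eq' Finset.univ i]
    rw [dif_neg h]
    simp

/-- Lemma B: a 0/1 matrix whose columns are indicators of intervals w.r.t. a monotone
weight on rows has determinant in `{-1,0,1}`. -/
lemma det_mem_of_interval_mono (k : ℕ) (w : Fin k → ℕ) (hw : Monotone w)
    (a b : Fin k → ℕ) (M : Matrix (Fin k) (Fin k) ℤ)
    (hM : ∀ i j, M i j = if a j ≤ w i ∧ w i < b j then 1 else 0) :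
    M.det ∈ ({-1,0,1} : Set ℤ) := by
  classical
  have hMdet : M.det = (Tmat k * M).det := by
    rw [Matrix.det_mul, Tmat_det, one_mul]
  rw [hMdet]
  have hone : ∀ i j, (Tmat k * M) i j = 1 →
      (a j ≤ w i ∧ w i < b j) ∧
        ∀ h : (i : ℕ) + 1 < k, ¬(a j ≤ w ⟨(i : ℕ) + 1, h⟩ ∧ w ⟨(i : ℕ) + 1, h⟩ < b j) := by
    intro i j hij
    rw [Tmat_mul_apply] at hij
    by_cases h : (i : ℕ) + 1 < k
    · rw [dif_pos h, hM, hM] at hij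
      constructor
      · split_ifs at hij <;> first | assumption | omega
      · intro _
        split_ifs at hij <;> first | assumption | omega
    · rw [dif_neg h, hM] at hij
      constructor
      · split_ifs at hij <;> first | assumption | omega
      · intro hc; exact absurd hc h
  have hneg : ∀ i j, (Tmat k * M) i j = -1 →
      ¬(a j ≤ w i ∧ w i < b j) ∧
        ∃ h : (i : ℕ) + 1 < k, (a j ≤ w ⟨(i : ℕ) + 1, h⟩ ∧ w ⟨(i : ℕ) + 1, h⟩ < b j) := by
    intro i j hij
    rw [Tmat_mul_apply] at hij
    by_cases h : (i : ℕ) + 1 < k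
    · rw [dif_pos h, hM, hM] at hij
      constructor
      · split_ifs at hij <;> first | assumption | omega
      · refine ⟨h, ?_⟩
        split_ifs at hij <;> first | assumption | omega
    · rw [dif_neg h, hM] at hij
      split_ifs at hij <;> omega
  apply det_mem_of_network
  · intro i j
    rw [Tmat_mul_apply]
    by_cases h : (i : ℕ) + 1 < k
    · rw [dif_pos h, hM, hM]
      split_ifs <;> simp
    · rw [dif_neg h, hM]
      split_ifs <;> simp
  · -- at most one +1 per column
    intro j i i' hi hi'
    by_contra hne
    obtain ⟨hPi, hNi⟩ := hone i j hi
    obtain ⟨hPi', hNi'⟩ := hone i' j hi'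
    rcases lt_or_gt_of_ne (fun h : i = i' => hne h) with hlt | hlt
    · have h1 : (i : ℕ) + 1 < k := lt_of_le_of_lt (Nat.succ_le_of_lt hlt) i'.isLt
      apply hNi h1
      constructor
      · exact le_trans hPi.1 (hw (by simp [Fin.le_def]))
      · exact lt_of_le_of_lt (hw (by simp [Fin.le_def]; omega)) hPi'.2
    · have h1 : (i' : ℕ) + 1 < k := lt_of_le_of_lt (Nat.succ_le_of_lt hlt) i.isLt
      apply hNi' h1
      constructor
      · exact le_trans hPi'.1 (hw (by simp [Fin.le_def]))
      · exact lt_of_le_of_lt (hw (by simp [Fin.le_def]; omega)) hPi.2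
  · -- at most one -1 per column
    intro j i i' hi hi'
    by_contra hne
    obtain ⟨hPi, h1i, hQi⟩ := hneg i j hi
    obtain ⟨hPi', h1i', hQi'⟩ := hneg i' j hi'
    rcases lt_or_gt_of_ne (fun h : i = i' => hne h) with hlt | hlt
    · apply hPi'
      constructor
      · refine le_trans hQi.1 (hw ?_)
        simp [Fin.le_def]; omega
      · exact lt_of_le_of_lt (hw (by simp [Fin.le_def])) hQi'.2
    · apply hPi
      constructor
      · refine le_trans hQi'.1 (hw ?_)
        simp [Fin.le_def]; omega
      · exact lt_of_le_of_lt (hw (by simp [Fin.le_def])) hQi.2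

/-- Lemma C: drop the monotonicity assumption by sorting the rows. -/
lemma det_mem_of_interval (k : ℕ) (w : Fin k → ℕ)
    (a b : Fin k → ℕ) (M : Matrix (Fin k) (Fin k) ℤ)
    (hM : ∀ i j, M i j = if a j ≤ w i ∧ w i < b j then 1 else 0) :
    M.det ∈ ({-1,0,1} : Set ℤ) := by
  classical
  have hmono : Monotone (w ∘ Tuple.sort w) := Tuple.monotone_sort w
  have hdet : (M.submatrix (Tuple.sort w) id).det = Equiv.Perm.sign (Tuple.sort w) * M.det :=
    Matrix.det_permute (Tuple.sort w) M
  have hmem : (M.submatrix (Tuple.sort w) id).det ∈ ({-1,0,1} : Set ℤ) := by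
    apply det_mem_of_interval_mono k (w ∘ Tuple.sort w) hmono a b
    intro i j
    simp [hM, Function.comp]
  rcases Int.units_eq_one_or (Equiv.Perm.sign (Tuple.sort w)) with hs | hs
  · rw [hs] at hdet
    simp at hdet
    rwa [← hdet]
  · rw [hs] at hdet
    simp at hdet
    have : M.det = -(M.submatrix (Tuple.sort w) id).det := by omega
    rw [this]
    exact neg_mem_S hmem

end StmtAux

/-- Stacking `α • C̃` on top of `β • Ĉ`, for ordinal cost matrices `C̃`, `Ĉ` and
`α, β ∈ {-1, 0, 1}`, yields a totally unimodular matrix. -/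
theorem stmt_8 (K₁ K₂ n : ℕ)
    (Ct : Matrix (Fin K₁) (Fin n) ℤ) (Ch : Matrix (Fin K₂) (Fin n) ℤ)
    (hCt : IsOrdinalCostMatrix Ct) (hCh : IsOrdinalCostMatrix Ch)
    (α β : ℤ) (hα : α ∈ ({-1, 0, 1} : Set ℤ)) (hβ : β ∈ ({-1, 0, 1} : Set ℤ)) :
    IsTotallyUnimod (Matrix.fromRows (α • Ct) (β • Ch)) := by
  classical
  intro k f g hf hg
  -- thresholds
  set t : Fin n → ℕ :=
    fun c => Finset.univ.sup (fun i : Fin K₁ => if Ct i c = 1 then (i : ℕ) + 1 else 0) with ht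
  set h : Fin n → ℕ :=
    fun c => Finset.univ.sup (fun i : Fin K₂ => if Ch i c = 1 then (i : ℕ) + 1 else 0) with hh
  have htle : ∀ c, t c ≤ K₁ := by
    intro c
    apply Finset.sup_le
    intro i _
    split_ifs <;> omega
  have htiff : ∀ (i : Fin K₁) c, Ct i c = 1 ↔ (i : ℕ) < t c := by
    intro i c
    constructor
    · intro h1
      have h2 : (if Ct i c = 1 then (i : ℕ) + 1 else 0) ≤ t c :=
        Finset.le_sup (f := fun i : Fin K₁ => if Ct i c = 1 then (i : ℕ) + 1 else 0)
          (Finset.mem_univ i)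
      rw [if_pos h1] at h2
      omega
    · intro h1
      have h1' : (i : ℕ) <
          Finset.univ.sup (fun i : Fin K₁ => if Ct i c = 1 then (i : ℕ) + 1 else 0) := h1
      rw [Finset.lt_sup_iff] at h1'
      obtain ⟨i', _, hi'⟩ := h1'
      by_cases hc : Ct i' c = 1
      · rw [if_pos hc] at hi'
        exact hCt.2 c i' i (by rw [Fin.le_def]; omega) hc
      · rw [if_neg hc] at hi'
        omega
  have hhiff : ∀ (i : Fin K₂) c, Ch i c = 1 ↔ (i : ℕ) < h c := by
    intro i c
    constructor
    · intro h1
      have h2 : (if Ch i c = 1 then (i : ℕ) + 1 else 0) ≤ h c :=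
        Finset.le_sup (f := fun i : Fin K₂ => if Ch i c = 1 then (i : ℕ) + 1 else 0)
          (Finset.mem_univ i)
      rw [if_pos h1] at h2
      omega
    · intro h1
      have h1' : (i : ℕ) <
          Finset.univ.sup (fun i : Fin K₂ => if Ch i c = 1 then (i : ℕ) + 1 else 0) := h1
      rw [Finset.lt_sup_iff] at h1'
      obtain ⟨i', _, hi'⟩ := h1'
      by_cases hc : Ch i' c = 1
      · rw [if_pos hc] at hi'
        exact hCh.2 c i' i (by rw [Fin.le_def]; omega) hc
      · rw [if_neg hc] at hi'
        omega
  -- the reversed-order weight on rows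
  have hkey : ∀ (r : Fin K₁ ⊕ Fin K₂) (c : Fin n),
      Matrix.fromRows Ct Ch r c =
        if K₁ - t c ≤ Sum.elim (fun i : Fin K₁ => K₁ - 1 - (i : ℕ))
              (fun i : Fin K₂ => K₁ + (i : ℕ)) r ∧
            Sum.elim (fun i : Fin K₁ => K₁ - 1 - (i : ℕ))
              (fun i : Fin K₂ => K₁ + (i : ℕ)) r < K₁ + h c
          then 1 else 0 := by
    intro r c
    have htc := htle c
    rcases r with i | i
    · have hiK : (i : ℕ) < K₁ := i.isLt
      rcases hCt.1 i c with h0 | h1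
    
      · have hnot : ¬ ((i : ℕ) < t c) := by
          intro hc
          rw [← htiff] at hc
          omega
        rw [Matrix.fromRows_apply_inl, h0, eq_comm]
        rw [if_neg]
        simp only [Sum.elim_inl]
        omega
      · have hit : (i : ℕ) < t c := (htiff i c).1 h1
        rw [Matrix.fromRows_apply_inl, h1, eq_comm]
        rw [if_pos]
        simp only [Sum.elim_inl]
        omega
    · rcases hCh.1 i c with h0 | h1
      · have hnot : ¬ ((i : ℕ) < h c) := by
          intro hc
          rw [← hhiff] at hc
          omega
        rw [Matrix.fromRows_apply_inr, h0, eq_comm]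
        rw [if_neg]
        simp only [Sum.elim_inr]
        omega
      · have hih : (i : ℕ) < h c := (hhiff i c).1 h1
        rw [Matrix.fromRows_apply_inr, h1, eq_comm]
        rw [if_pos]
        simp only [Sum.elim_inr]
        omega
  -- peel off the scalars
  have hsplit : (Matrix.fromRows (α • Ct) (β • Ch)).submatrix f g =
      Matrix.of (fun i j => (Sum.elim (fun _ : Fin K₁ => α) (fun _ : Fin K₂ => β)) (f i) *
        (Matrix.fromRows Ct Ch).submatrix f g i j) := by
    ext i j
    rcases hr : f i with i1 | i2 <;>
      simp [hr, Matrix.smul_apply, smul_eq_mul]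
  rw [hsplit, Matrix.det_mul_column]
  apply StmtAux.mul_mem_S
  · apply Finset.prod_induction _ (fun x => x ∈ ({-1,0,1} : Set ℤ))
    · intro x y hx hy
      exact StmtAux.mul_mem_S hx hy
    · simp
    · intro i _
      rcases hr : f i with i1 | i2 <;> simp [hr, hα, hβ]
  · apply StmtAux.det_mem_of_interval k
      ((Sum.elim (fun i : Fin K₁ => K₁ - 1 - (i : ℕ)) (fun i : Fin K₂ => K₁ + (i : ℕ))) ∘ f)
      (fun j => K₁ - t (g j)) (fun j => K₁ + h (g j))
    intro i j
    simp only [Matrix.submatrix_apply, Function.comp]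
    rw [hkey]
end

section
/- Let C̃, Ĉ be ordinal cost matrices as above and α, β ∈ {−1, 0, 1}. Then the matrix obtained by stacking α·C̃, the all-ones row vector 1^T, and β·Ĉ is totally unimodular. -/
private lemma tri_mul {a b : ℤ} (ha : a ∈ ({-1, 0, 1} : Set ℤ))
    (hb : b ∈ ({-1, 0, 1} : Set ℤ)) : a * b ∈ ({-1, 0, 1} : Set ℤ) := by
  simp only [Set.mem_insert_iff, Set.mem_singleton_iff] at *
  rcases ha with h | h | h <;> rcases hb with h' | h' | h' <;> subst h <;> subst h' <;> norm_num

private lemma tri_neg {a : ℤ} (ha : a ∈ ({-1, 0, 1} : Set ℤ)) :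
    -a ∈ ({-1, 0, 1} : Set ℤ) := by
  simp only [Set.mem_insert_iff, Set.mem_singleton_iff] at *
  rcases ha with h | h | h <;> subst h <;> norm_num

private lemma tri_prod {ι : Type*} (t : Finset ι) (v : ι → ℤ)
    (hv : ∀ i, v i ∈ ({-1, 0, 1} : Set ℤ)) : (∏ i ∈ t, v i) ∈ ({-1, 0, 1} : Set ℤ) := by
  classical
  refine Finset.prod_induction v _ (fun a b ha hb => tri_mul ha hb) (by simp) (fun i _ => hv i)

/-- Determinant of a square integer matrix in which every column has at most one `+1`,
at most one `-1`, and all other entries `0`, lies in `{-1, 0, 1}`. -/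
private lemma detB : ∀ (k : ℕ) (A : Matrix (Fin k) (Fin k) ℤ),
    (∀ i j, A i j = -1 ∨ A i j = 0 ∨ A i j = 1) →
    (∀ (j i i' : Fin k), A i j = 1 → A i' j = 1 → i = i') →
    (∀ (j i i' : Fin k), A i j = -1 → A i' j = -1 → i = i') →
    A.det ∈ ({-1, 0, 1} : Set ℤ) := by
  intro k
  induction k with
  | zero => intro A _ _ _; simp [Matrix.det_fin_zero]
  | succ k ih =>
    intro A htri hone hneg
    by_cases hall : ∀ j, (∃ i, A i j = 1) ∧ (∃ i, A i j = -1)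
    · -- every column sums to zero, so the determinant is zero
      have hsum : ∀ j, (∑ i, A i j) = 0 := by
        intro j
        obtain ⟨⟨i1, h1⟩, ⟨i2, h2⟩⟩ := hall j
        have hne : i1 ≠ i2 := by
          intro h; subst h; rw [h1] at h2; norm_num at h2
        have hval : ∀ i, A i j =
            (if i = i1 then (1 : ℤ) else 0) + (if i = i2 then (-1 : ℤ) else 0) := by
          intro i
          rcases htri i j with h | h | h
          · have hi2 : i = i2 := hneg j i i2 h h2
            rw [hi2] at h ⊢
            rw [h, if_neg (fun hh => hne hh.symm), if_pos rfl]
            norm_num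
          · have hni1 : i ≠ i1 := by intro hh; subst hh; rw [h1] at h; norm_num at h
            have hni2 : i ≠ i2 := by intro hh; subst hh; rw [h2] at h; norm_num at h
            simp [h, hni1, hni2]
          · have hi1 : i = i1 := hone j i i1 h h1
            rw [hi1] at h ⊢
            rw [h, if_pos rfl, if_neg hne]
            norm_num
        calc (∑ i, A i j)
            = ∑ i, ((if i = i1 then (1 : ℤ) else 0) + (if i = i2 then (-1 : ℤ) else 0)) :=
              Finset.sum_congr rfl (fun i _ => hval i)
          _ = 0 := by rw [Finset.sum_add_distrib]; simp
      have hdet0 : A.det = 0 := by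
        apply Matrix.exists_vecMul_eq_zero_iff.mp
        refine ⟨fun _ => 1, ?_, ?_⟩
        · intro h
          have := congrFun h 0
          norm_num at this
        · funext j
          simp only [Matrix.vecMul, dotProduct, one_mul, Pi.zero_apply]
          exact hsum j
      rw [hdet0]; simp
    · rw [not_forall] at hall
      obtain ⟨j, hj⟩ := hall
      rw [not_and_or] at hj
      push_neg at hj
      by_cases hz : ∀ i, A i j = 0
      · rw [Matrix.det_eq_zero_of_column_eq_zero j hz]; simp
      · push_neg at hz
        obtain ⟨i0, hi0⟩ := hz
        have huniq : ∀ i, i ≠ i0 → A i j = 0 := by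
          intro i hnei
          by_contra hne2
          rcases hj with hj | hj
          · have ha : A i j = -1 := by
              rcases htri i j with h | h | h
              · exact h
              · exact absurd h hne2
              · exact absurd h (hj i)
            have hb : A i0 j = -1 := by
              rcases htri i0 j with h | h | h
              · exact h
              · exact absurd h hi0
              · exact absurd h (hj i0)
            exact hnei (hneg j i i0 ha hb)
          · have ha : A i j = 1 := by
              rcases htri i j with h | h | h
              · exact absurd h (hj i)
              · exact absurd h hne2
              · exact h
            have hb : A i0 j = 1 := by
              rcases htri i0 j with h | h | h
              · exact absurd h (hj i0)
              · exact absurd h hi0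
              · exact h
            exact hnei (hone j i i0 ha hb)
        rw [Matrix.det_succ_column A j]
        rw [Fintype.sum_eq_single i0 (fun i hni => by rw [huniq i hni]; ring)]
        refine tri_mul (tri_mul ?_ ?_) (ih _ ?_ ?_ ?_)
        · rcases neg_one_pow_eq_or ℤ ((i0 : ℕ) + (j : ℕ)) with h | h <;> rw [h] <;> simp
        · rcases htri i0 j with h | h | h <;> rw [h] <;> simp
        · intro i j'
          exact htri _ _
        · intro j' i i' h h'
          exact Fin.succAbove_right_injective (hone _ _ _ h h')
        · intro j' i i' h h'
          exact Fin.succAbove_right_injective (hneg _ _ _ h h')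

/-- Determinant of a square 0/1 integer matrix in which every column has contiguous support
lies in `{-1, 0, 1}`. -/
private lemma detA (k : ℕ) (N : Matrix (Fin k) (Fin k) ℤ)
    (h01 : ∀ i j, N i j = 0 ∨ N i j = 1)
    (hctg : ∀ (j i1 i2 i3 : Fin k), i1 ≤ i2 → i2 ≤ i3 →
      N i1 j = 1 → N i3 j = 1 → N i2 j = 1) :
    N.det ∈ ({-1, 0, 1} : Set ℤ) := by
  classical
  set L : Matrix (Fin k) (Fin k) ℤ :=
    Matrix.of fun i j => if i = j then 1 else if (j : ℕ) + 1 = (i : ℕ) then -1 else 0 with hL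
  have hLtri : L.BlockTriangular OrderDual.toDual := by
    intro i j hij
    have hlt : (i : ℕ) < (j : ℕ) := hij
    simp only [hL, Matrix.of_apply]
    rw [if_neg (by intro h; subst h; omega), if_neg (by omega)]
  have hdetL : L.det = 1 := by
    rw [Matrix.det_of_lowerTriangular L hLtri]
    simp [hL]
  have hDval : ∀ i j, (L * N) i j =
      N i j - (if (i : ℕ) = 0 then 0
        else N ⟨(i : ℕ) - 1, Nat.lt_of_le_of_lt (Nat.sub_le _ _) i.isLt⟩ j) := by
    intro i j
    rw [Matrix.mul_apply]
    by_cases hi : (i : ℕ) = 0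
    · rw [if_pos hi]
      rw [Finset.sum_eq_single i]
      · simp [hL]
      · intro x _ hx
        have h1 : i ≠ x := Ne.symm hx
        have h2 : (x : ℕ) + 1 ≠ (i : ℕ) := by omega
        simp [hL, h1, h2]
      · simp
    · rw [if_neg hi]
      set ip : Fin k := ⟨(i : ℕ) - 1, Nat.lt_of_le_of_lt (Nat.sub_le _ _) i.isLt⟩ with hip
      have hipne : i ≠ ip := by
        intro h
        have : (i : ℕ) = (ip : ℕ) := by rw [h]
        simp only [hip] at this
        omega
      have key : ∀ x : Fin k, L i x * N x j =
          (if x = i then N x j else 0) + (if x = ip then -N x j else 0) := by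
        intro x
        simp only [hL, Matrix.of_apply]
        by_cases h1 : x = i
        · subst h1
          rw [if_pos rfl, if_pos rfl, if_neg hipne]
          ring
        · by_cases h2 : x = ip
          · have h3 : ¬ (i = x) := fun h => h1 h.symm
            have h4 : (x : ℕ) + 1 = (i : ℕ) := by
              have : (x : ℕ) = (i : ℕ) - 1 := by rw [h2]
              omega
            rw [if_neg h3, if_pos h4, if_neg h1, if_pos h2]
            ring
          · have h3 : ¬ (i = x) := fun h => h1 h.symm
            have h4 : ¬ ((x : ℕ) + 1 = (i : ℕ)) := by
              intro h
              apply h2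
              apply Fin.ext
              show (x : ℕ) = (i : ℕ) - 1
              omega
            rw [if_neg h3, if_neg h4, if_neg h1, if_neg h2]
            ring
      rw [Finset.sum_congr rfl (fun x _ => key x), Finset.sum_add_distrib]
      rw [Finset.sum_ite_eq' Finset.univ i (fun x => N x j),
        Finset.sum_ite_eq' Finset.univ ip (fun x => -N x j)]
      simp [sub_eq_add_neg]
  have hdet : (L * N).det = N.det := by rw [Matrix.det_mul, hdetL, one_mul]
  have htri : ∀ i j, (L * N) i j = -1 ∨ (L * N) i j = 0 ∨ (L * N) i j = 1 := by
    intro i j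
    rw [hDval]
    by_cases hi : (i : ℕ) = 0
    · rw [if_pos hi]
      rcases h01 i j with h | h <;> rw [h] <;> norm_num
    · rw [if_neg hi]
      rcases h01 i j with h | h <;>
        rcases h01 ⟨(i : ℕ) - 1, Nat.lt_of_le_of_lt (Nat.sub_le _ _) i.isLt⟩ j with h' | h' <;>
          rw [h, h'] <;> norm_num
  have hone : ∀ (j i i' : Fin k), (L * N) i j = 1 → (L * N) i' j = 1 → i = i' := by
    have key : ∀ (j i i' : Fin k), i < i' → (L * N) i j = 1 → (L * N) i' j = 1 → False := by
      intro j i i' hlt h h'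
      rw [hDval] at h h'
      have hNi : N i j = 1 := by
        by_cases hi : (i : ℕ) = 0
        · rw [if_pos hi] at h; omega
        · rw [if_neg hi] at h
          rcases h01 i j with hh | hh
          · rcases h01 ⟨(i : ℕ) - 1, Nat.lt_of_le_of_lt (Nat.sub_le _ _) i.isLt⟩ j with hh' | hh' <;>
              omega
          · exact hh
      have hi' : ¬ ((i' : ℕ) = 0) := by
        have : (i : ℕ) < (i' : ℕ) := hlt
        omega
      rw [if_neg hi'] at h'
      set ip' : Fin k := ⟨(i' : ℕ) - 1, Nat.lt_of_le_of_lt (Nat.sub_le _ _) i'.isLt⟩ with hip'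
      have hNi' : N i' j = 1 ∧ N ip' j = 0 := by
        rcases h01 i' j with hh | hh <;> rcases h01 ip' j with hh' | hh' <;>
          first
          | exact ⟨by omega, by omega⟩
          | omega
      have hle1 : i ≤ ip' := by
        have hltn : (i : ℕ) < (i' : ℕ) := hlt
        rw [Fin.le_def]
        show (i : ℕ) ≤ (i' : ℕ) - 1
        omega
      have hle2 : ip' ≤ i' := by
        rw [Fin.le_def]
        show (i' : ℕ) - 1 ≤ (i' : ℕ)
        omega
      have := hctg j i ip' i' hle1 hle2 hNi hNi'.1
      rw [this] at hNi'
      omega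
    intro j i i' h h'
    rcases lt_trichotomy i i' with hlt | heq | hlt
    · exact absurd (key j i i' hlt h h') (fun h => h)
    · exact heq
    · exact absurd (key j i' i hlt h' h) (fun h => h)
  have hneg : ∀ (j i i' : Fin k), (L * N) i j = -1 → (L * N) i' j = -1 → i = i' := by
    have facts : ∀ (j i : Fin k), (L * N) i j = -1 →
        ¬ ((i : ℕ) = 0) ∧ N i j = 0 ∧
          N ⟨(i : ℕ) - 1, Nat.lt_of_le_of_lt (Nat.sub_le _ _) i.isLt⟩ j = 1 := by
      intro j i h
      rw [hDval] at h
      by_cases hi : (i : ℕ) = 0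
      · rw [if_pos hi] at h
        rcases h01 i j with hh | hh <;> omega
      · rw [if_neg hi] at h
        refine ⟨hi, ?_, ?_⟩ <;>
          · rcases h01 i j with hh | hh <;>
              rcases h01 ⟨(i : ℕ) - 1, Nat.lt_of_le_of_lt (Nat.sub_le _ _) i.isLt⟩ j with hh' | hh' <;>
                omega
    have key : ∀ (j i i' : Fin k), i < i' → (L * N) i j = -1 → (L * N) i' j = -1 → False := by
      intro j i i' hlt h h'
      obtain ⟨hi0, hNi, hNip⟩ := facts j i h
      obtain ⟨hi0', hNi', hNip'⟩ := facts j i' h'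
      have hltn : (i : ℕ) < (i' : ℕ) := hlt
      have hle1 : (⟨(i : ℕ) - 1, Nat.lt_of_le_of_lt (Nat.sub_le _ _) i.isLt⟩ : Fin k) ≤ i := by
        rw [Fin.le_def]
        show (i : ℕ) - 1 ≤ (i : ℕ)
        omega
      have hle2 : i ≤ (⟨(i' : ℕ) - 1, Nat.lt_of_le_of_lt (Nat.sub_le _ _) i'.isLt⟩ : Fin k) := by
        rw [Fin.le_def]
        show (i : ℕ) ≤ (i' : ℕ) - 1
        omega
      have := hctg j _ i _ hle1 hle2 hNip hNip'
      omega
    intro j i i' h h'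
    rcases lt_trichotomy i i' with hlt | heq | hlt
    · exact absurd (key j i i' hlt h h') (fun h => h)
    · exact heq
    · exact absurd (key j i' i hlt h' h) (fun h => h)
  have := detB k (L * N) htri hone hneg
  rwa [hdet] at this

/-- Stacking `α • C̃`, the all-ones row `1ᵀ`, and `β • Ĉ`, for ordinal cost
matrices `C̃`, `Ĉ` and `α, β ∈ {-1, 0, 1}`, yields a totally unimodular matrix. -/
theorem stmt_9 (K₁ K₂ n : ℕ)
    (Ct : Matrix (Fin K₁) (Fin n) ℤ) (Ch : Matrix (Fin K₂) (Fin n) ℤ)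
    (hCt : IsOrdinalCostMatrix Ct) (hCh : IsOrdinalCostMatrix Ch)
    (α β : ℤ) (hα : α ∈ ({-1, 0, 1} : Set ℤ)) (hβ : β ∈ ({-1, 0, 1} : Set ℤ)) :
    IsTotallyUnimod
      (Matrix.fromRows (α • Ct)
        (Matrix.fromRows (Matrix.of fun (_ : Fin 1) (_ : Fin n) => (1 : ℤ))
          (β • Ch))) := by
  obtain ⟨hCt1, hCt2⟩ := hCt
  obtain ⟨hCh1, hCh2⟩ := hCh
  intro k f g hf hg
  classical
  set M₁ : Matrix (Fin K₁ ⊕ (Fin 1 ⊕ Fin K₂)) (Fin n) ℤ :=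
    Matrix.fromRows Ct (Matrix.fromRows (Matrix.of fun _ _ => (1 : ℤ)) Ch) with hM₁
  set s : (Fin K₁ ⊕ (Fin 1 ⊕ Fin K₂)) → ℤ :=
    Sum.elim (fun _ => α) (Sum.elim (fun _ => (1 : ℤ)) (fun _ => β)) with hs
  have hMs : ∀ i j,
      (Matrix.fromRows (α • Ct)
        (Matrix.fromRows (Matrix.of fun (_ : Fin 1) (_ : Fin n) => (1 : ℤ)) (β • Ch))) i j
        = s i * M₁ i j := by
    rintro (i | i | i) j <;> simp [hM₁, hs]
  have hsub : (Matrix.fromRows (α • Ct)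
        (Matrix.fromRows (Matrix.of fun (_ : Fin 1) (_ : Fin n) => (1 : ℤ)) (β • Ch))).submatrix f g
      = Matrix.of (fun a b => (fun x => s (f x)) a * (M₁.submatrix f g) a b) := by
    ext a b
    simp [hMs]
  rw [hsub, Matrix.det_mul_column]
  refine tri_mul (tri_prod _ _ ?_) ?_
  · intro a
    rcases f a with i | i | i <;> simp [hs]
    · exact hα
    · exact hβ
  -- it remains to show the unsigned submatrix determinant is in {-1, 0, 1}
  set w : (Fin K₁ ⊕ (Fin 1 ⊕ Fin K₂)) → ℕ :=
    Sum.elim (fun i => K₁ - (i : ℕ)) (Sum.elim (fun _ => K₁ + 1) (fun i => K₁ + 2 + (i : ℕ)))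
    with hw
  set σ : Equiv.Perm (Fin k) := Tuple.sort (w ∘ f) with hσ
  have hmono : Monotone ((w ∘ f) ∘ σ) := Tuple.monotone_sort (w ∘ f)
  -- the sorted submatrix has 0/1 entries with contiguous column supports
  have h01 : ∀ a b, (M₁.submatrix (f ∘ σ) g) a b = 0 ∨ (M₁.submatrix (f ∘ σ) g) a b = 1 := by
    intro a b
    simp only [Matrix.submatrix_apply, Function.comp_apply]
    rcases f (σ a) with i | i | i
    · simpa [hM₁] using hCt1 i (g b)
    · simp [hM₁]
    · simpa [hM₁] using hCh1 i (g b)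
  have struct : ∀ (r r' r'' : Fin K₁ ⊕ (Fin 1 ⊕ Fin K₂)) (j : Fin n),
      w r ≤ w r' → w r' ≤ w r'' → M₁ r j = 1 → M₁ r'' j = 1 → M₁ r' j = 1 := by
    rintro r (i' | i' | i') r'' j h1 h2 hr hr''
    · rcases r with i | i | i
      · have hle : i' ≤ i := by
          have hi := i.isLt
          have hi' := i'.isLt
          simp only [hw, Sum.elim_inl] at h1
          rw [Fin.le_def]
          omega
        simp only [hM₁, Matrix.fromRows_apply_inl] at hr ⊢
        exact hCt2 j i i' hle hr
      · exfalso
        have hi' := i'.isLt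
        simp only [hw, Sum.elim_inl, Sum.elim_inr] at h1
        omega
      · exfalso
        have hi' := i'.isLt
        simp only [hw, Sum.elim_inl, Sum.elim_inr] at h1
        omega
    · simp [hM₁]
    · rcases r'' with i | i | i
      · exfalso
        have hi := i.isLt
        simp only [hw, Sum.elim_inl, Sum.elim_inr] at h2
        omega
      · exfalso
        simp only [hw, Sum.elim_inl, Sum.elim_inr] at h2
        omega
      · have hle : i' ≤ i := by
          simp only [hw, Sum.elim_inr] at h2
          rw [Fin.le_def]
          omega
        simp only [hM₁, Matrix.fromRows_apply_inr] at hr'' ⊢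
        exact hCh2 j i i' hle hr''
  have hctg : ∀ (b a1 a2 a3 : Fin k), a1 ≤ a2 → a2 ≤ a3 →
      (M₁.submatrix (f ∘ σ) g) a1 b = 1 → (M₁.submatrix (f ∘ σ) g) a3 b = 1 →
      (M₁.submatrix (f ∘ σ) g) a2 b = 1 := by
    intro b a1 a2 a3 h12 h23 h1 h3
    exact struct (f (σ a1)) (f (σ a2)) (f (σ a3)) (g b) (hmono h12) (hmono h23) h1 h3
  have hsorted : (M₁.submatrix (f ∘ σ) g).det ∈ ({-1, 0, 1} : Set ℤ) :=
    detA k (M₁.submatrix (f ∘ σ) g) h01 hctg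
  have hpermeq : M₁.submatrix (f ∘ σ) g = (M₁.submatrix f g).submatrix σ id := by
    rw [Matrix.submatrix_submatrix]
    rfl
  have hperm := Matrix.det_permute σ (M₁.submatrix f g)
  rw [← hpermeq] at hperm
  rcases Int.units_eq_one_or (Equiv.Perm.sign σ) with h | h <;> rw [h] at hperm <;>
    simp only [Units.val_one, Units.val_neg, Units.val_one, one_mul, neg_one_mul,
      Int.cast_one, Int.cast_neg] at hperm
  · rwa [← hperm]
  · have heq : (M₁.submatrix f g).det = -(M₁.submatrix (f ∘ ⇑σ) g).det := by omega
    rw [heq]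
    exact tri_neg hsorted
end

section
/- Let o : {1,...,n} → {1,...,K} be a category assignment with associated ordinal cost matrix C (prefix-of-ones columns), and let b ∈ Z^K be weakly decreasing and nonnegative with b_{K+1} := 0. Define E_i := {j : o(j) = i}. Then there exists x ∈ {0,1}^n with C·x = b if and only if |E_i| ≥ b_i − b_{i+1} for all i = 1,...,K. -/
/-!
Write `y_i` for the number of selected elements of category `i`. Then `(C·x)_k = ∑_{i ≥ k} y_i`,
and a vector of tail sums determines its entries by successive differences, so `C·x = b` says
exactly `y_i = b_i - b_{i+1}`. These differences are nonnegative because `b` is decreasing and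
nonnegative, and a subset of `E_i` of any size between `0` and `|E_i|` can be chosen
independently for each `i`.
-/

open Finset

section TailSum

variable {M : Type*} {K : ℕ}

/-- `b (i + 1)`, read as `0` past the last index: the convention `b_{K+1} = 0`. -/
def succOrZero [Zero M] (b : Fin K → M) (i : Fin K) : M :=
  if h : (i : ℕ) + 1 < K then b ⟨i + 1, h⟩ else 0

def tailSum [AddCommMonoid M] (y : Fin K → M) (k : Fin K) : M :=
  ∑ i with k ≤ i, y i

lemma tailSum_eq_add_succOrZero [AddCommMonoid M] (y : Fin K → M) (k : Fin K) :
    tailSum y k = y k + succOrZero (tailSum y) k := by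
  unfold tailSum succOrZero
  split_ifs with h
  · have hsplit : univ.filter (k ≤ ·) = insert k (univ.filter ((⟨k + 1, h⟩ : Fin K) ≤ ·)) := by
      ext i
      simp only [mem_filter, mem_univ, true_and, mem_insert, Fin.le_def, Fin.ext_iff]
      omega
    rw [hsplit, sum_insert (by simp [Fin.le_def])]
  · have hsingle : univ.filter (k ≤ ·) = {k} := by
      ext i
      simp only [mem_filter, mem_univ, true_and, mem_singleton, Fin.le_def, Fin.ext_iff]
      omega
    rw [hsingle, sum_singleton, add_zero]

lemma tailSum_eq_iff [AddCommGroup M] (y b : Fin K → M) :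
    tailSum y = b ↔ ∀ k, y k = b k - succOrZero b k := by
  constructor
  · rintro rfl k
    rw [tailSum_eq_add_succOrZero y k, add_sub_cancel_right]
  · intro hy
    suffices h : ∀ m, ∀ k : Fin K, K - k ≤ m → tailSum y k = b k from
      funext fun k => h _ k le_rfl
    intro m
    induction m with
    | zero => intro k hk; omega
    | succ m ih =>
      intro k hk
      have hsucc : succOrZero (tailSum y) k = succOrZero b k := by
        unfold succOrZero
        split_ifs with h
        · exact ih _ (by simp only; omega)
        · rfl
      rw [tailSum_eq_add_succOrZero, hsucc, hy k, sub_add_cancel]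

end TailSum

lemma Matrix.mulVec_eq_tailSum {ι R : Type*} [Fintype ι] [NonAssocSemiring R] {K : ℕ}
    (o : ι → Fin K) (C : Matrix (Fin K) ι R) (hC : ∀ j i, C j i = if j ≤ o i then 1 else 0)
    (x : ι → R) : C.mulVec x = tailSum (fun i => ∑ j with o j = i, x j) := by
  funext k
  simp only [Matrix.mulVec, dotProduct, hC, ite_mul, one_mul, zero_mul, tailSum]
  rw [← sum_filter, ← sum_fiberwise_of_maps_to (t := {i | k ≤ i}) (g := o) (by simp)]
  refine sum_congr rfl fun i hi => ?_
  rw [filter_filter]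
  refine sum_congr (filter_congr fun j _ => ?_) fun _ _ => rfl
  exact and_iff_right_of_imp fun h => h ▸ (mem_filter.1 hi).2

lemma exists_zero_one_fiberwise_sum_eq_iff {ι β : Type*} [Fintype ι] [DecidableEq β]
    (o : ι → β) (d : β → ℤ) (hd : ∀ i, 0 ≤ d i) :
    (∃ x : ι → ℤ, (∀ j, x j = 0 ∨ x j = 1) ∧ ∀ i, ∑ j with o j = i, x j = d i) ↔
      ∀ i, d i ≤ #{j | o j = i} := by
  constructor
  · rintro ⟨x, hx, hsum⟩ i
    rw [← hsum i]
    simpa using sum_le_card_nsmul _ x 1 fun j _ => (hx j).elim (·.le.trans zero_le_one) (·.le)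
  · intro hcard
    classical
    have hchoose : ∀ i, ∃ S ⊆ ({j | o j = i} : Finset ι), #S = (d i).toNat := fun i =>
      exists_subset_card_eq (by have := hcard i; omega)
    choose S hS hScard using hchoose
    refine ⟨fun j => if j ∈ S (o j) then 1 else 0, fun j => ite_eq_or_eq _ _ _ |>.symm, fun i => ?_⟩
    calc ∑ j with o j = i, (if j ∈ S (o j) then (1 : ℤ) else 0)
        = ∑ j with o j = i, (if j ∈ S i then (1 : ℤ) else 0) :=
          sum_congr rfl fun j hj => by rw [(mem_filter.1 hj).2]
      _ = #(S i) := by rw [sum_boole, filter_mem_eq_inter, inter_eq_right.2 (hS i)]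
      _ = d i := by rw [hScard, Int.toNat_of_nonneg (hd i)]

/-- Feasibility of the equality-constrained ε-constraint scalarization: for an
ordinal cost matrix `C` induced by `o` and a weakly decreasing nonnegative
right-hand side `b` (with the convention `b_{K+1} = 0`), there exists a binary
vector `x` with `C·x = b` if and only if `|E_i| ≥ b_i - b_{i+1}` for all `i`,
where `E_i = {j : o j = i}`. -/
theorem stmt_11 (n K : ℕ) (o : Fin n → Fin K)
    (C : Matrix (Fin K) (Fin n) ℤ)
    (hC : ∀ (j : Fin K) (i : Fin n), C j i = if j ≤ o i then 1 else 0)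
    (b : Fin K → ℤ)
    (hmono : ∀ i j : Fin K, i ≤ j → b j ≤ b i)
    (hnn : ∀ i : Fin K, 0 ≤ b i) :
    (∃ x : Fin n → ℤ, (∀ j, x j = 0 ∨ x j = 1) ∧ C.mulVec x = b) ↔
      (∀ i : Fin K,
        b i - (if h : (i : ℕ) + 1 < K then b ⟨(i : ℕ) + 1, h⟩ else 0) ≤
          ((Finset.univ.filter (fun j => o j = i)).card : ℤ)) := by
  have hgap : ∀ i, 0 ≤ b i - succOrZero b i := by
    intro i
    unfold succOrZero
    split_ifs with h
    · exact sub_nonneg.2 (hmono _ _ (Fin.le_def.2 (Nat.le_succ _)))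
    · simpa using hnn i
  simp_rw [C.mulVec_eq_tailSum o hC, tailSum_eq_iff]
  exact exists_zero_one_fiberwise_sum_eq_iff o _ hgap
end

section
/- For the multi-objective unconstrained problem min (α·C̃x, β·Ĉx, γ·f(x)) over x ∈ {0,1}^n with ordinal cost matrices C̃ ∈ {0,1}^{K̃×n}, Ĉ ∈ {0,1}^{K̂×n} (prefix-of-ones columns) and a linear objective f, the number of distinct values attained by the pair (C̃x, Ĉx) over all x ∈ {0,1}^n is at most (n+1)^{K̃+K̂−1}; consequently the nondominated set has cardinality O(n^{K̃+K̂−1}) for fixed K̃, K̂. -/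
lemma aux_bound {m n : ℕ} (C : Matrix (Fin m) (Fin n) ℤ) (x : Fin n → ℤ)
    (hC : ∀ i j, C i j = 0 ∨ C i j = 1) (hx : ∀ j, x j = 0 ∨ x j = 1) (i : Fin m) :
    0 ≤ C.mulVec x i ∧ C.mulVec x i ≤ n := by
  have hterm : ∀ j, 0 ≤ C i j * x j ∧ C i j * x j ≤ 1 := by
    intro j
    rcases hC i j with h | h <;> rcases hx j with h' | h' <;> simp [h, h']
  have h1 : C.mulVec x i = ∑ j, C i j * x j := rfl
  constructor
  · rw [h1]; exact Finset.sum_nonneg fun j _ => (hterm j).1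
  · rw [h1]
    calc ∑ j, C i j * x j ≤ ∑ _j : Fin n, (1 : ℤ) :=
          Finset.sum_le_sum fun j _ => (hterm j).2
      _ = n := by simp

lemma aux_first {m n : ℕ} (C : Matrix (Fin m) (Fin n) ℤ) (x : Fin n → ℤ)
    (i : Fin m) (h1 : ∀ j, C i j = 1) :
    C.mulVec x i = ∑ j, x j := by
  show ∑ j, C i j * x j = ∑ j, x j
  exact Finset.sum_congr rfl fun j _ => by rw [h1 j, one_mul]

/-- For ordinal cost matrices `C̃ ∈ {0,1}^{K₁×n}` and `Ĉ ∈ {0,1}^{K₂×n}`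
(prefix-of-ones columns, first row all ones), the number of distinct values of
the pair `(C̃x, Ĉx)` over all binary `x` is at most `(n+1)^(K₁+K₂-1)`. -/
theorem stmt_15 (K₁ K₂ n : ℕ) (hK₁ : 0 < K₁) (hK₂ : 0 < K₂)
    (Ct : Matrix (Fin K₁) (Fin n) ℤ) (Ch : Matrix (Fin K₂) (Fin n) ℤ)
    (hCt01 : ∀ i j, Ct i j = 0 ∨ Ct i j = 1)
    (hCh01 : ∀ i j, Ch i j = 0 ∨ Ch i j = 1)
    (hCtpre : ∀ (j : Fin n) (i i' : Fin K₁), i' ≤ i → Ct i j = 1 → Ct i' j = 1)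
    (hChpre : ∀ (j : Fin n) (i i' : Fin K₂), i' ≤ i → Ch i j = 1 → Ch i' j = 1)
    (hCt1 : ∀ j, Ct ⟨0, hK₁⟩ j = 1) (hCh1 : ∀ j, Ch ⟨0, hK₂⟩ j = 1) :
    Nat.card {p : (Fin K₁ → ℤ) × (Fin K₂ → ℤ) //
        ∃ x : Fin n → ℤ, (∀ j, x j = 0 ∨ x j = 1) ∧
          Ct.mulVec x = p.1 ∧ Ch.mulVec x = p.2} ≤
      (n + 1) ^ (K₁ + K₂ - 1) := by
  set S := {p : (Fin K₁ → ℤ) × (Fin K₂ → ℤ) //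
        ∃ x : Fin n → ℤ, (∀ j, x j = 0 ∨ x j = 1) ∧
          Ct.mulVec x = p.1 ∧ Ch.mulVec x = p.2} with hS
  -- the injection
  let f : S → (Fin (K₁ + K₂ - 1) → Fin (n + 1)) := fun p i =>
    if h : (i : ℕ) < K₁ then
      ⟨(p.1.1 ⟨i, h⟩).toNat % (n + 1), Nat.mod_lt _ (by omega)⟩
    else
      ⟨(p.1.2 ⟨(i : ℕ) - K₁ + 1, by have := i.2; omega⟩).toNat % (n + 1),
        Nat.mod_lt _ (by omega)⟩
  -- bounds for elements of S
  have hbd1 : ∀ (p : S) (k : Fin K₁), 0 ≤ p.1.1 k ∧ p.1.1 k ≤ n := by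
    rintro ⟨p, x, hx, h1, h2⟩ k
    rw [← h1]; exact aux_bound Ct x hCt01 hx k
  have hbd2 : ∀ (p : S) (k : Fin K₂), 0 ≤ p.1.2 k ∧ p.1.2 k ≤ n := by
    rintro ⟨p, x, hx, h1, h2⟩ k
    rw [← h2]; exact aux_bound Ch x hCh01 hx k
  have hfirst : ∀ p : S, p.1.2 ⟨0, hK₂⟩ = p.1.1 ⟨0, hK₁⟩ := by
    rintro ⟨p, x, hx, h1, h2⟩
    simp only [← h1, ← h2]
    rw [aux_first Ct x _ hCt1, aux_first Ch x _ hCh1]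
  have hinj : Function.Injective f := by
    intro p q hpq
    have hpq' : ∀ i, f p i = f q i := fun i => congrFun hpq i
    -- first components agree
    have h1 : p.1.1 = q.1.1 := by
      funext k
      have hi : (k : ℕ) < K₁ + K₂ - 1 := by have := k.2; omega
      have := hpq' ⟨k, hi⟩
      simp only [f, Fin.val_mk, dif_pos (show ((⟨(k : ℕ), hi⟩ : Fin (K₁ + K₂ - 1)) : ℕ) < K₁ from k.2),
        Fin.mk.injEq, Fin.eta] at this
      have b1 := hbd1 p k
      have b2 := hbd1 q k
      rw [Nat.mod_eq_of_lt (by omega), Nat.mod_eq_of_lt (by omega)] at this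
      omega
    have h2 : p.1.2 = q.1.2 := by
      funext k
      rcases Nat.eq_zero_or_pos (k : ℕ) with hk0 | hk0
      · have hk : k = ⟨0, hK₂⟩ := by apply Fin.ext; exact hk0
        rw [hk, hfirst p, hfirst q, h1]
      · have hi : K₁ + (k : ℕ) - 1 < K₁ + K₂ - 1 := by have := k.2; omega
        have hnot : ¬ ((⟨K₁ + (k : ℕ) - 1, hi⟩ : Fin (K₁ + K₂ - 1)) : ℕ) < K₁ := by
          simp; omega
        have := hpq' ⟨K₁ + (k : ℕ) - 1, hi⟩
        simp only [f, Fin.val_mk, dif_neg hnot, Fin.mk.injEq] at this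
        have hk : (⟨K₁ + (k : ℕ) - 1 - K₁ + 1, by have := k.2; omega⟩ : Fin K₂) = k := by
          apply Fin.ext; simp; omega
        rw [hk] at this
        have b1 := hbd2 p k
        have b2 := hbd2 q k
        rw [Nat.mod_eq_of_lt (by omega), Nat.mod_eq_of_lt (by omega)] at this
        omega
    exact Subtype.ext (Prod.ext h1 h2)
  calc Nat.card S ≤ Nat.card (Fin (K₁ + K₂ - 1) → Fin (n + 1)) :=
        Nat.card_le_card_of_injective f hinj
    _ = (n + 1) ^ (K₁ + K₂ - 1) := by simp
end
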